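/- arXiv:2605.18354 — 6 statements merged into one kernel-verified Lean document; each statement's English description precedes it below -/
import Mathlib

section
/- Let S_1, …, S_m, S_{m+1} be exchangeable real-valued random variables, and let S_{(1)} ≤ ⋯ ≤ S_{(m)} denote the order statistics of the first m of them. Then for every integer k with 1 ≤ k ≤ m, P(S_{m+1} ≤ S_{(k)}) ≥ k/(m+1). -/
/-!
Rank each of the `m + 1` variables by the number of the others lying strictly below it.
Whatever the values, the first `k` indices of a sorting permutation have rank `< k`, so the
events `{rank j < k}` have probabilities summing to at least `k`. Exchangeability makes these
probabilities equal, and `{rank (m + 1) < k}` is exactly the event `S (m + 1) ≤ S_(k)`.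
-/

open MeasureTheory

/-- The `k`-th order statistic (1-indexed) of the values `f 0, …, f (m-1)`:
the `k`-th smallest value.  Junk value `0` when the index is out of range. -/
noncomputable def orderStatN {m : ℕ} (f : Fin m → ℝ) (k : ℕ) : ℝ :=
  if h : k - 1 < m then f (Tuple.sort f ⟨k - 1, h⟩) else 0

/-- A finite family of real-valued random variables is exchangeable if its joint
distribution is invariant under every permutation of the indices. -/
def Exchangeable {Ω : Type*} [MeasurableSpace Ω] (P : Measure Ω) {n : ℕ}
    (S : Fin n → Ω → ℝ) : Prop :=
  ∀ σ : Equiv.Perm (Fin n),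
    Measure.map (fun ω (i : Fin n) => S (σ i) ω) P =
      Measure.map (fun ω (i : Fin n) => S i ω) P

open Finset

section StrictRank

variable {ι α : Type*} [Fintype ι] [LinearOrder α]

theorem card_filter_comp_perm (p : ι → Prop) [DecidablePred p] (σ : Equiv.Perm ι) :
    #{i | p (σ i)} = #{i | p i} := by
  simp only [card_filter]
  exact Equiv.sum_comp σ fun i => if p i then 1 else 0

def strictRank (x : ι → α) (j : ι) : ℕ :=
  #{i | x i < x j}

theorem strictRank_comp_perm (x : ι → α) (σ : Equiv.Perm ι) (j : ι) :
    strictRank (fun i => x (σ i)) j = strictRank x (σ j) :=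
  card_filter_comp_perm (fun i => x i < x (σ j)) σ

theorem strictRank_last {m : ℕ} (y : Fin (m + 1) → α) :
    strictRank y (Fin.last m) = #{i : Fin m | y i.castSucc < y (Fin.last m)} := by
  rw [strictRank, card_filter, card_filter, Fin.sum_univ_castSucc]
  simp

theorem Monotone.strictRank_le {n : ℕ} {g : Fin n → α} (hg : Monotone g) (a : Fin n) :
    strictRank g a ≤ a :=
  calc strictRank g a ≤ #(Iio a) :=
        card_le_card fun _ hi => mem_Iio.2 (hg.reflect_lt (mem_filter.1 hi).2)
    _ = a := Fin.card_Iio a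

theorem Monotone.le_apply_iff_card_filter_lt_le {n : ℕ} {g : Fin n → α} (hg : Monotone g)
    (a : Fin n) (t : α) : t ≤ g a ↔ #{i | g i < t} ≤ a := by
  constructor
  · intro ht
    calc #{i | g i < t} ≤ strictRank g a := card_le_card fun i hi =>
          mem_filter.2 ⟨mem_univ _, (mem_filter.1 hi).2.trans_le ht⟩
      _ ≤ a := hg.strictRank_le a
  · intro hcard
    by_contra! ht
    have : #(Iic a) ≤ #{i | g i < t} :=
      card_le_card fun i hi => mem_filter.2 ⟨mem_univ _, (hg (mem_Iic.1 hi)).trans_lt ht⟩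
    rw [Fin.card_Iic] at this
    omega

theorem le_card_strictRank_lt {n k : ℕ} (hkn : k ≤ n) (x : Fin n → α) :
    k ≤ #{j | strictRank x j < k} := by
  set σ := Tuple.sort x
  have hrank (a : Fin k) : strictRank x (σ (Fin.castLE hkn a)) < k := by
    rw [← strictRank_comp_perm]
    exact ((Tuple.monotone_sort x).strictRank_le _).trans_lt a.2
  calc k = #(univ : Finset (Fin k)) := (card_fin k).symm
    _ ≤ #{j | strictRank x j < k} :=
      card_le_card_of_injOn (fun a => σ (Fin.castLE hkn a))
        (fun a _ => mem_filter.2 ⟨mem_univ _, hrank a⟩)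
        (σ.injective.comp (Fin.castLE_injective hkn)).injOn

end StrictRank

theorem le_orderStatN_iff {m k : ℕ} (hk1 : 1 ≤ k) (hkm : k ≤ m) (x : Fin m → ℝ) (t : ℝ) :
    t ≤ orderStatN x k ↔ #{i | x i < t} < k := by
  have hk : k - 1 < m := by omega
  have hg : Monotone fun i => x (Tuple.sort x i) := Tuple.monotone_sort x
  rw [orderStatN, dif_pos hk, ← card_filter_comp_perm (fun i => x i < t) (Tuple.sort x),
    hg.le_apply_iff_card_filter_lt_le, Fin.val_mk]
  omega

theorem measurable_strictRank {ι : Type*} [Fintype ι] (j : ι) :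
    Measurable fun x : ι → ℝ => strictRank x j := by
  simp only [strictRank, card_filter]
  exact Finset.measurable_sum _ fun i _ => Measurable.ite
    (measurableSet_lt (measurable_pi_apply i) (measurable_pi_apply j))
    measurable_const measurable_const

theorem natCast_mul_le_sum_measure {Ω ι : Type*} [MeasurableSpace Ω] [Fintype ι] (μ : Measure Ω)
    {A : ι → Set Ω} (hA : ∀ j, MeasurableSet (A j)) {k : ℕ}
    (hcover : ∀ ω, ∃ s : Finset ι, k ≤ #s ∧ ∀ j ∈ s, ω ∈ A j) :
    k * μ Set.univ ≤ ∑ j, μ (A j) := by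
  have hpoint (ω : Ω) : (k : ENNReal) ≤ ∑ j, (A j).indicator 1 ω := by
    obtain ⟨s, hks, hs⟩ := hcover ω
    calc (k : ENNReal) ≤ #s := by exact_mod_cast hks
      _ = ∑ j ∈ s, (A j).indicator 1 ω := by
        rw [sum_congr rfl fun j hj => Set.indicator_of_mem (hs j hj) 1]
        simp
      _ ≤ ∑ j, (A j).indicator 1 ω := sum_le_sum_of_subset (subset_univ s)
  calc k * μ Set.univ = ∫⁻ _, (k : ENNReal) ∂μ := (lintegral_const _).symm
    _ ≤ ∫⁻ ω, ∑ j, (A j).indicator 1 ω ∂μ := lintegral_mono hpoint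
    _ = ∑ j, μ (A j) := by
      rw [lintegral_finsetSum _ fun j _ => measurable_one.indicator (hA j)]
      exact sum_congr rfl fun j _ => lintegral_indicator_one (hA j)

namespace Exchangeable

variable {Ω : Type*} [MeasurableSpace Ω] {P : Measure Ω} {n : ℕ} {S : Fin n → Ω → ℝ}

theorem measure_comp_perm_mem (hexch : Exchangeable P S) (hS : ∀ i, Measurable (S i))
    (σ : Equiv.Perm (Fin n)) {B : Set (Fin n → ℝ)} (hB : MeasurableSet B) :
    P {ω | (fun i => S (σ i) ω) ∈ B} = P {ω | (fun i => S i ω) ∈ B} := by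
  have h := congrArg (· B) (hexch σ)
  rwa [Measure.map_apply (measurable_pi_lambda _ fun i => hS _) hB,
    Measure.map_apply (measurable_pi_lambda _ hS) hB] at h

theorem measure_strictRank_lt_eq (hexch : Exchangeable P S) (hS : ∀ i, Measurable (S i))
    (k : ℕ) (i j : Fin n) :
    P {ω | strictRank (fun l => S l ω) i < k} = P {ω | strictRank (fun l => S l ω) j < k} := by
  refine Eq.trans ?_ (hexch.measure_comp_perm_mem hS (Equiv.swap i j)
    (B := {x | strictRank x j < k}) (measurable_strictRank j measurableSet_Iio))
  congr 1
  ext ω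
  rw [Set.mem_ofPred_eq, Set.mem_ofPred_eq, Set.mem_ofPred_eq,
    strictRank_comp_perm (fun l => S l ω), Equiv.swap_apply_right]

end Exchangeable

/-- If `S 1, …, S m, S (m+1)` are exchangeable and `S_{(1)} ≤ ⋯ ≤ S_{(m)}` are the order
statistics of the first `m` of them, then for every `1 ≤ k ≤ m`,
`P(S_{m+1} ≤ S_{(k)}) ≥ k / (m+1)`. -/
theorem stmt0 {Ω : Type*} [MeasurableSpace Ω] (P : Measure Ω) [IsProbabilityMeasure P]
    {m : ℕ} (S : Fin (m + 1) → Ω → ℝ) (hmeas : ∀ i, Measurable (S i))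
    (hexch : Exchangeable P S) (k : ℕ) (hk1 : 1 ≤ k) (hkm : k ≤ m) :
    (k : ENNReal) / ((m : ENNReal) + 1) ≤
      P {ω | S (Fin.last m) ω ≤ orderStatN (fun i : Fin m => S i.castSucc ω) k} := by
  set A : Fin (m + 1) → Set Ω := fun j => {ω | strictRank (fun i => S i ω) j < k}
  have hA (j : Fin (m + 1)) : MeasurableSet (A j) :=
    (measurable_strictRank j).comp (measurable_pi_lambda _ hmeas) measurableSet_Iio
  have hsum := natCast_mul_le_sum_measure P hA fun ω =>
    ⟨_, le_card_strictRank_lt (by omega) (fun i => S i ω), fun j hj => (mem_filter.1 hj).2⟩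
  simp only [A, measure_univ, mul_one, hexch.measure_strictRank_lt_eq hmeas k _ (Fin.last m),
    sum_const, card_univ, Fintype.card_fin, nsmul_eq_mul] at hsum
  have htarget : {ω | S (Fin.last m) ω ≤ orderStatN (fun i : Fin m => S i.castSucc ω) k} =
      A (Fin.last m) := by
    ext ω
    simp [A, le_orderStatN_iff hk1 hkm, strictRank_last]
  rw [htarget, ENNReal.div_le_iff (by simp) (by simp)]
  simpa [mul_comm] using hsum
end

section
/- (Tuning oracle inequality for a finite search class.) Let 𝒜 be a finite set, and for each a ∈ 𝒜 let C_a be a measurable set-valued predictor on 𝒳 with measurable size functional s(C_a(·)) taking values in [0, B]. Let (X_1,Y_1), …, (X_n,Y_n) be i.i.d. from a distribution P on 𝒳 × 𝒴, and define R(a) = P(Y ∉ C_a(X)), S(a) = E[s(C_a(X))], and their empirical versions R̂, Ŝ on the sample. Fix ε_R, ε_S, η > 0 and α ∈ (0,1), suppose n ≥ max{ log(4|𝒜|/η)/(2 ε_R²), B² log(4|𝒜|/η)/(2 ε_S²) }, and suppose {a : R(a) ≤ α − 2ε_R} is nonempty. Let â minimize Ŝ over {a ∈ 𝒜 : R̂(a)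 ≤ α − ε_R} whenever this set is nonempty. Then with probability at least 1 − η: the feasible set is nonempty, R(â) ≤ α, and S(â) ≤ min{ S(a) : R(a) ≤ α − 2ε_R } + 2ε_S. -/
/-!
By Hoeffding's inequality and a union bound, with probability at least `1 - η` every empirical
miscoverage `R̂ a` is within `ε_R` of `R a` and every empirical size `Ŝ a` within `ε_S` of `S a`:
the sample-size condition makes each of these `2|𝒜|` two-sided tails at most `η / (2|𝒜|)`.
On that event every `a` with `R a ≤ α - 2ε_R` is empirically feasible, so `â` is defined,
`R â ≤ R̂ â + ε_R ≤ α`, and `S â ≤ Ŝ â + ε_S ≤ Ŝ a + ε_S ≤ S a + 2ε_S`.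
-/

open MeasureTheory ProbabilityTheory Real

section Hoeffding

variable {Ω E : Type*} [MeasurableSpace Ω] [MeasurableSpace E]
  {P : Measure Ω} {ν : Measure E} {f : E → ℝ} {a b : ℝ}

lemma hasSubgaussianMGF_comp_sub_integral [IsProbabilityMeasure P] {Y : Ω → E}
    (hY : Measurable Y) (hY_map : P.map Y = ν) (hf : Measurable f) (hfab : ∀ x, f x ∈ Set.Icc a b) :
    HasSubgaussianMGF (fun ω ↦ f (Y ω) - ∫ x, f x ∂ν) ((‖b - a‖₊ / 2) ^ 2) P := by
  have hmean : ∫ ω, f (Y ω) ∂P = ∫ x, f x ∂ν := by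
    rw [← hY_map, integral_map hY.aemeasurable hf.aestronglyMeasurable]
  simpa [hmean] using
    hasSubgaussianMGF_of_mem_Icc (μ := P) (X := f ∘ Y) (hf.comp hY).aemeasurable
      (ae_of_all _ (hfab <| Y ·))

lemma measureReal_mul_le_sum_le {n : ℕ} {X : Fin n → Ω → ℝ} (hindep : iIndepFun X P)
    (hX : ∀ i, HasSubgaussianMGF (X i) ((‖b - a‖₊ / 2) ^ 2) P) {ε : ℝ} (hε : 0 ≤ ε) :
    P.real {ω | n * ε ≤ ∑ i, X i ω} ≤ exp (-2 * n * ε ^ 2 / (b - a) ^ 2) := by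
  refine (HasSubgaussianMGF.measure_sum_ge_le_of_iIndepFun hindep (fun i _ ↦ hX i)
    (by positivity)).trans_eq ?_
  congr 1
  simp only [Finset.sum_const, Finset.card_univ, Fintype.card_fin, nsmul_eq_mul, NNReal.coe_mul,
    NNReal.coe_natCast, NNReal.coe_pow, NNReal.coe_div, coe_nnnorm, Real.norm_eq_abs, div_pow,
    sq_abs, NNReal.coe_ofNat]
  rcases eq_or_ne n 0 with rfl | hn
  · simp
  rcases eq_or_ne (b - a) 0 with hab | hab
  · simp [hab]
  field_simp

lemma measureReal_le_abs_mean_sub_integral_le [IsProbabilityMeasure P] {n : ℕ}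
    {Z : Fin n → Ω → E} (hZ : ∀ i, Measurable (Z i)) (hindep : iIndepFun Z P)
    (hid : ∀ i, P.map (Z i) = ν) (hf : Measurable f) (hfab : ∀ x, f x ∈ Set.Icc a b)
    {ε : ℝ} (hε : 0 ≤ ε) :
    P.real {ω | ε ≤ |(n : ℝ)⁻¹ * ∑ i, f (Z i ω) - ∫ x, f x ∂ν|} ≤
      2 * exp (-2 * n * ε ^ 2 / (b - a) ^ 2) := by
  set m := ∫ x, f x ∂ν
  set X : Fin n → Ω → ℝ := fun i ω ↦ f (Z i ω) - m
  have hX i : HasSubgaussianMGF (X i) ((‖b - a‖₊ / 2) ^ 2) P :=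
    hasSubgaussianMGF_comp_sub_integral (hZ i) (hid i) hf hfab
  have hXindep : iIndepFun X P := hindep.comp (fun _ x ↦ f x - m) fun _ ↦ hf.sub_const m
  have hsum ω : |∑ i, X i ω| = n * |(n : ℝ)⁻¹ * ∑ i, f (Z i ω) - m| := by
    rcases eq_or_ne n 0 with rfl | hn
    · simp
    have hcenter : ∑ i, X i ω = n * ((n : ℝ)⁻¹ * ∑ i, f (Z i ω) - m) := by
      simp [X, Finset.sum_sub_distrib, mul_sub, hn]
    rw [hcenter, abs_mul, abs_of_nonneg (by positivity)]
  have hsub : {ω | ε ≤ |(n : ℝ)⁻¹ * ∑ i, f (Z i ω) - m|} ⊆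
      {ω | n * ε ≤ ∑ i, X i ω} ∪ {ω | n * ε ≤ ∑ i, -X i ω} := by
    intro ω hω
    have : n * ε ≤ |∑ i, X i ω| := hsum ω ▸ mul_le_mul_of_nonneg_left hω (by positivity)
    rcases le_abs'.mp this with h | h
    · exact Or.inr (by simp only [Set.mem_ofPred_eq, Finset.sum_neg_distrib]; linarith)
    · exact Or.inl h
  calc P.real {ω | ε ≤ |(n : ℝ)⁻¹ * ∑ i, f (Z i ω) - m|}
      ≤ P.real {ω | n * ε ≤ ∑ i, X i ω} + P.real {ω | n * ε ≤ ∑ i, -X i ω} :=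
        (measureReal_mono hsub).trans (measureReal_union_le _ _)
    _ ≤ exp (-2 * n * ε ^ 2 / (b - a) ^ 2) + exp (-2 * n * ε ^ 2 / (b - a) ^ 2) :=
        add_le_add (measureReal_mul_le_sum_le hXindep hX hε)
          (measureReal_mul_le_sum_le (hXindep.comp (fun _ ↦ Neg.neg) fun _ ↦ measurable_neg)
            (fun i ↦ (hX i).neg) hε)
    _ = 2 * exp (-2 * n * ε ^ 2 / (b - a) ^ 2) := by ring

lemma measureReal_le_abs_mean_sub_integral_le_of_log_le [IsProbabilityMeasure P] {n : ℕ}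
    {Z : Fin n → Ω → E} (hZ : ∀ i, Measurable (Z i)) (hindep : iIndepFun Z P)
    (hid : ∀ i, P.map (Z i) = ν) (hf : Measurable f) (hfab : ∀ x, f x ∈ Set.Icc a b)
    (hab : a < b) {ε δ : ℝ} (hε : 0 < ε) (hδ : 0 < δ)
    (hsize : (b - a) ^ 2 * log (2 / δ) / (2 * ε ^ 2) ≤ n) :
    P.real {ω | ε ≤ |(n : ℝ)⁻¹ * ∑ i, f (Z i ω) - ∫ x, f x ∂ν|} ≤ δ := by
  have hexponent : log (2 / δ) ≤ 2 * n * ε ^ 2 / (b - a) ^ 2 := by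
    rw [div_le_iff₀ (by positivity)] at hsize
    rw [le_div_iff₀ (pow_pos (sub_pos.mpr hab) 2)]
    linarith
  calc _ ≤ 2 * exp (-(2 * n * ε ^ 2 / (b - a) ^ 2)) := by
        simpa [neg_div, neg_mul] using
          measureReal_le_abs_mean_sub_integral_le hZ hindep hid hf hfab hε.le
    _ ≤ 2 * exp (-log (2 / δ)) := by gcongr
    _ = δ := by rw [exp_neg, exp_log (by positivity)]; field_simp

end Hoeffding

lemma ofReal_one_sub_sum_le_measure_setOf_forall {Ω ι : Type*} [MeasurableSpace Ω]
    [Fintype ι] {P : Measure Ω} [IsProbabilityMeasure P] {p : ι → Ω → Prop} {δ : ι → ℝ}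
    (h : ∀ i, P.real {ω | ¬ p i ω} ≤ δ i) :
    ENNReal.ofReal (1 - ∑ i, δ i) ≤ P {ω | ∀ i, p i ω} := by
  have hcompl : P.real {ω | ∀ i, p i ω}ᶜ ≤ ∑ i, δ i := by
    simp only [Set.compl_ofPred, not_forall, Set.ofPred_exists]
    exact (measureReal_iUnion_fintype_le _).trans (Finset.sum_le_sum fun i _ ↦ h i)
  have : 1 ≤ P.real {ω | ∀ i, p i ω} + P.real {ω | ∀ i, p i ω}ᶜ := by
    simpa using measureReal_union_le (μ := P) {ω | ∀ i, p i ω} {ω | ∀ i, p i ω}ᶜ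
  rw [← ofReal_measureReal]
  exact ENNReal.ofReal_le_ofReal (by linarith)

lemma tuning_guarantee_of_uniform_deviation {𝒜 : Type*} {R S Rhat Shat : 𝒜 → ℝ} {ahat : 𝒜}
    {εR εS α : ℝ} (hR : ∀ a, |Rhat a - R a| ≤ εR) (hS : ∀ a, |Shat a - S a| ≤ εS)
    (horacle : ∃ a, R a ≤ α - 2 * εR)
    (hahat : (∃ a, Rhat a ≤ α - εR) →
      Rhat ahat ≤ α - εR ∧ ∀ a, Rhat a ≤ α - εR → Shat ahat ≤ Shat a) :
    (∃ a, Rhat a ≤ α - εR) ∧ R ahat ≤ α ∧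
      S ahat ≤ (⨅ a : {a : 𝒜 // R a ≤ α - 2 * εR}, S a.1) + 2 * εS := by
  have hfeasible a (ha : R a ≤ α - 2 * εR) : Rhat a ≤ α - εR := by
    linarith [(abs_le.mp (hR a)).2]
  obtain ⟨a₀, ha₀⟩ := horacle
  obtain ⟨hahat_feasible, hahat_min⟩ := hahat ⟨a₀, hfeasible a₀ ha₀⟩
  refine ⟨⟨a₀, hfeasible a₀ ha₀⟩, by linarith [hahat_feasible, (abs_le.mp (hR ahat)).1], ?_⟩
  have : Nonempty {a : 𝒜 // R a ≤ α - 2 * εR} := ⟨⟨a₀, ha₀⟩⟩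
  rw [← sub_le_iff_le_add]
  refine le_ciInf fun ⟨a, ha⟩ ↦ ?_
  linarith [hahat_min a (hfeasible a ha), (abs_le.mp (hS ahat)).1, (abs_le.mp (hS a)).2]

theorem stmt5_general {Ω 𝒳 𝒴 𝒜 : Type*} [MeasurableSpace Ω] [MeasurableSpace 𝒳] [MeasurableSpace 𝒴]
    [Fintype 𝒜]
    (P : Measure Ω) [IsProbabilityMeasure P]
    (ν : Measure (𝒳 × 𝒴)) [IsProbabilityMeasure ν]
    {n : ℕ}
    (Z : Fin n → Ω → 𝒳 × 𝒴) (hZmeas : ∀ i, Measurable (Z i))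
    (hindep : ProbabilityTheory.iIndepFun Z P)
    (hid : ∀ i, Measure.map (Z i) P = ν)
    (C : 𝒜 → 𝒳 → Set 𝒴) (hC : ∀ a, MeasurableSet {p : 𝒳 × 𝒴 | p.2 ∈ C a p.1})
    (sz : 𝒜 → 𝒳 → ℝ) (hszmeas : ∀ a, Measurable (sz a))
    (B : ℝ) (hB : 0 < B) (hsz : ∀ a x, sz a x ∈ Set.Icc (0 : ℝ) B)
    -- population miscoverage and size
    (R S : 𝒜 → ℝ)
    (hRdef : ∀ a, R a = (ν {p : 𝒳 × 𝒴 | p.2 ∉ C a p.1}).toReal)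
    (hSdef : ∀ a, S a = ∫ p, sz a p.1 ∂ν)
    -- empirical miscoverage and size
    (Rhat Shat : 𝒜 → Ω → ℝ)
    (hRhatdef : ∀ a ω, Rhat a ω = (n : ℝ)⁻¹ * ∑ i : Fin n,
        Set.indicator {p : 𝒳 × 𝒴 | p.2 ∉ C a p.1} (fun _ => (1 : ℝ)) (Z i ω))
    (hShatdef : ∀ a ω, Shat a ω = (n : ℝ)⁻¹ * ∑ i : Fin n, sz a (Z i ω).1)
    (εR εS η α : ℝ) (hεR : 0 < εR) (hεS : 0 < εS) (hη : 0 < η)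
    (hnbig :
      max (Real.log (4 * (Fintype.card 𝒜) / η) / (2 * εR ^ 2))
          (B ^ 2 * Real.log (4 * (Fintype.card 𝒜) / η) / (2 * εS ^ 2)) ≤ (n : ℝ))
    (horacle : ∃ a, R a ≤ α - 2 * εR)
    -- `ahat` minimizes the empirical size over the empirically feasible set whenever
    -- that set is nonempty
    (ahat : Ω → 𝒜)
    (hahat : ∀ ω, (∃ a, Rhat a ω ≤ α - εR) →
      Rhat (ahat ω) ω ≤ α - εR ∧ ∀ a, Rhat a ω ≤ α - εR → Shat (ahat ω) ω ≤ Shat a ω) :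
    ENNReal.ofReal (1 - η) ≤
      P {ω | (∃ a, Rhat a ω ≤ α - εR) ∧ R (ahat ω) ≤ α ∧
          S (ahat ω) ≤ (⨅ a : {a : 𝒜 // R a ≤ α - 2 * εR}, S a.1) + 2 * εS} := by
  obtain ⟨a₀, ha₀⟩ := horacle
  set N := (Fintype.card 𝒜 : ℝ)
  have hN : 0 < N := Nat.cast_pos.mpr (Fintype.card_pos_iff.mpr ⟨a₀⟩)
  set δ := η / (2 * N) with hδ_def
  have hδ : 2 / δ = 4 * N / η := by rw [hδ_def]; field_simp; ring
  have hRdev a : P.real {ω | εR ≤ |Rhat a ω - R a|} ≤ δ := by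
    have hmeas : MeasurableSet {p : 𝒳 × 𝒴 | p.2 ∉ C a p.1} := (hC a).compl
    simp only [hRhatdef, hRdef, ← measureReal_def, ← integral_indicator_one hmeas]
    refine measureReal_le_abs_mean_sub_integral_le_of_log_le hZmeas hindep hid
      (measurable_const.indicator hmeas) (fun p ↦ ?_) one_pos hεR (by positivity)
      (by simpa [hδ] using (le_max_left _ _).trans hnbig)
    exact ⟨Set.indicator_nonneg (fun _ _ ↦ zero_le_one) p,
      Set.indicator_apply_le' (fun _ ↦ le_rfl) fun _ ↦ zero_le_one⟩
  have hSdev a : P.real {ω | εS ≤ |Shat a ω - S a|} ≤ δ := by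
    simp only [hShatdef, hSdef]
    exact measureReal_le_abs_mean_sub_integral_le_of_log_le hZmeas hindep hid
      ((hszmeas a).comp measurable_fst) (fun p ↦ hsz a p.1) hB hεS (by positivity)
      (by simpa [hδ] using (le_max_right _ _).trans hnbig)
  have hdev a : P.real {ω | ¬ (|Rhat a ω - R a| < εR ∧ |Shat a ω - S a| < εS)} ≤ δ + δ := by
    simp only [not_and_or, not_lt, Set.ofPred_or]
    exact (measureReal_union_le _ _).trans (add_le_add (hRdev a) (hSdev a))
  calc ENNReal.ofReal (1 - η) = ENNReal.ofReal (1 - ∑ _a : 𝒜, (δ + δ)) := by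
        rw [Finset.sum_const, Finset.card_univ, nsmul_eq_mul]
        congr
        rw [hδ_def]
        field_simp
        ring
    _ ≤ P {ω | ∀ a, |Rhat a ω - R a| < εR ∧ |Shat a ω - S a| < εS} :=
        ofReal_one_sub_sum_le_measure_setOf_forall hdev
    _ ≤ _ := measure_mono fun ω hω ↦ tuning_guarantee_of_uniform_deviation
        (fun a ↦ (hω a).1.le) (fun a ↦ (hω a).2.le) ⟨a₀, ha₀⟩ (hahat ω)

/-- Tuning oracle inequality for a finite search class: with an i.i.d. tuning sample of size
`n ≥ max{log(4|𝒜|/η)/(2ε_R²), B² log(4|𝒜|/η)/(2ε_S²)}` and a nonempty oracle-feasible set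
`{a : R(a) ≤ α - 2ε_R}`, if `â` minimizes the empirical size `Ŝ` over the empirically
feasible set `{a : R̂(a) ≤ α - ε_R}` whenever that set is nonempty, then with probability at
least `1 - η` the empirically feasible set is nonempty, `R(â) ≤ α`, and
`S(â) ≤ min{S(a) : R(a) ≤ α - 2ε_R} + 2ε_S`. -/
theorem stmt5 {Ω 𝒳 𝒴 𝒜 : Type*} [MeasurableSpace Ω] [MeasurableSpace 𝒳] [MeasurableSpace 𝒴]
    [Fintype 𝒜] [Nonempty 𝒜]
    (P : Measure Ω) [IsProbabilityMeasure P]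
    (ν : Measure (𝒳 × 𝒴)) [IsProbabilityMeasure ν]
    {n : ℕ} (hn : 0 < n)
    (Z : Fin n → Ω → 𝒳 × 𝒴) (hZmeas : ∀ i, Measurable (Z i))
    (hindep : ProbabilityTheory.iIndepFun Z P)
    (hid : ∀ i, Measure.map (Z i) P = ν)
    (C : 𝒜 → 𝒳 → Set 𝒴) (hC : ∀ a, MeasurableSet {p : 𝒳 × 𝒴 | p.2 ∈ C a p.1})
    (sz : 𝒜 → 𝒳 → ℝ) (hszmeas : ∀ a, Measurable (sz a))
    (B : ℝ) (hB : 0 < B) (hsz : ∀ a x, sz a x ∈ Set.Icc (0 : ℝ) B)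
    -- population miscoverage and size
    (R S : 𝒜 → ℝ)
    (hRdef : ∀ a, R a = (ν {p : 𝒳 × 𝒴 | p.2 ∉ C a p.1}).toReal)
    (hSdef : ∀ a, S a = ∫ p, sz a p.1 ∂ν)
    -- empirical miscoverage and size
    (Rhat Shat : 𝒜 → Ω → ℝ)
    (hRhatdef : ∀ a ω, Rhat a ω = (n : ℝ)⁻¹ * ∑ i : Fin n,
        Set.indicator {p : 𝒳 × 𝒴 | p.2 ∉ C a p.1} (fun _ => (1 : ℝ)) (Z i ω))
    (hShatdef : ∀ a ω, Shat a ω = (n : ℝ)⁻¹ * ∑ i : Fin n, sz a (Z i ω).1)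
    (εR εS η α : ℝ) (hεR : 0 < εR) (hεS : 0 < εS) (hη : 0 < η)
    (hα : α ∈ Set.Ioo (0 : ℝ) 1)
    (hnbig :
      max (Real.log (4 * (Fintype.card 𝒜) / η) / (2 * εR ^ 2))
          (B ^ 2 * Real.log (4 * (Fintype.card 𝒜) / η) / (2 * εS ^ 2)) ≤ (n : ℝ))
    (horacle : ∃ a, R a ≤ α - 2 * εR)
    -- `ahat` minimizes the empirical size over the empirically feasible set whenever
    -- that set is nonempty
    (ahat : Ω → 𝒜)
    (hahat : ∀ ω, (∃ a, Rhat a ω ≤ α - εR) →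
      Rhat (ahat ω) ω ≤ α - εR ∧ ∀ a, Rhat a ω ≤ α - εR → Shat (ahat ω) ω ≤ Shat a ω) :
    ENNReal.ofReal (1 - η) ≤
      P {ω | (∃ a, Rhat a ω ≤ α - εR) ∧ R (ahat ω) ≤ α ∧
          S (ahat ω) ≤ (⨅ a : {a : 𝒜 // R a ≤ α - 2 * εR}, S a.1) + 2 * εS} :=
  stmt5_general P ν Z hZmeas hindep hid C hC sz hszmeas B hB hsz R S hRdef hSdef Rhat Shat hRhatdef
    hShatdef εR εS η α hεR hεS hη hnbig horacle ahat hahat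
end

section
/- (Right-tail order-statistic deviation inclusion.) Let S_1, …, S_m be real numbers with order statistics S_{(1)} ≤ ⋯ ≤ S_{(m)}, let F̂_m(q) = (1/m)·#{i : S_i ≤ q} be their empirical distribution function, and let F be a function with values in [0,1]. Let p ∈ [0,1], k = ⌈(m+1)p⌉ with k ≤ m, and q̂ = S_{(k)}. Fix q* ∈ ℝ, t > 0 and c > 0 with F(q* + t) ≥ p + c·t. If q̂ > q* + t, then sup_q |F̂_m(q) − F(q)| > c·t − 2/m. -/
/-- The empirical distribution function `F̂_m(q) = (1/m) · #{i : S i ≤ q}`. -/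
noncomputable def empCDF {m : ℕ} (S : Fin m → ℝ) (q : ℝ) : ℝ :=
  (m : ℝ)⁻¹ * (Finset.univ.filter fun i => S i ≤ q).card

open Finset

theorem card_filter_le_le_of_lt_sort {m : ℕ} (S : Fin m → ℝ) (j : Fin m) {q : ℝ}
    (hq : q < S (Tuple.sort S j)) : #{i | S i ≤ q} ≤ j := by
  calc #{i | S i ≤ q} ≤ #(Iio j) := by
        refine card_le_card_of_injOn (Tuple.sort S).symm (fun i hi => ?_)
          (Tuple.sort S).symm.injective.injOn
        have hi : S (Tuple.sort S ((Tuple.sort S).symm i)) < S (Tuple.sort S j) := by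
          simpa using (mem_filter.mp hi).2.trans_lt hq
        simpa using (Tuple.monotone_sort S).reflect_lt hi
    _ = j := Fin.card_Iio j

theorem empCDF_le_of_lt_orderStatN {m k : ℕ} (S : Fin m → ℝ) (hk1 : 1 ≤ k) (hkm : k ≤ m)
    {q : ℝ} (hq : q < orderStatN S k) : empCDF S q ≤ ((k : ℝ) - 1) / m := by
  have hk : k - 1 < m := by omega
  rw [orderStatN, dif_pos hk] at hq
  have hcard : (#{i | S i ≤ q} : ℝ) ≤ (k : ℝ) - 1 := by
    simpa [Nat.cast_sub hk1] using
      (Nat.cast_le (α := ℝ)).mpr (card_filter_le_le_of_lt_sort S _ hq)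
  rw [empCDF, inv_mul_eq_div]
  gcongr

theorem empCDF_nonneg {m : ℕ} (S : Fin m → ℝ) (q : ℝ) : 0 ≤ empCDF S q := by
  unfold empCDF
  positivity

theorem empCDF_le_one {m : ℕ} (S : Fin m → ℝ) (q : ℝ) : empCDF S q ≤ 1 := by
  rcases Nat.eq_zero_or_pos m with rfl | hm
  · simp [empCDF]
  rw [empCDF, inv_mul_le_iff₀ (by exact_mod_cast hm), mul_one]
  exact_mod_cast (card_filter_le _ _).trans_eq (card_fin m)

theorem bddAbove_range_abs_empCDF_sub {m : ℕ} (S : Fin m → ℝ) {F : ℝ → ℝ}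
    (hF : ∀ q, F q ∈ Set.Icc (0 : ℝ) 1) :
    BddAbove (Set.range fun q => |empCDF S q - F q|) := by
  refine ⟨1, Set.forall_mem_range.mpr fun q => abs_sub_le_iff.mpr ⟨?_, ?_⟩⟩ <;>
    linarith [empCDF_nonneg S q, empCDF_le_one S q, (hF q).1, (hF q).2]

theorem stmt8_general {m : ℕ} (S : Fin m → ℝ)
    (F : ℝ → ℝ) (hF : ∀ q, F q ∈ Set.Icc (0 : ℝ) 1)
    (p : ℝ) (hp : p ∈ Set.Icc (0 : ℝ) 1)
    (k : ℕ) (hk : k = ⌈((m : ℝ) + 1) * p⌉₊) (hk1 : 1 ≤ k) (hkm : k ≤ m)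
    (qstar t c : ℝ)
    (hgrow : p + c * t ≤ F (qstar + t))
    (hq : qstar + t < orderStatN S k) :
    c * t - 2 / m < ⨆ q : ℝ, |empCDF S q - F q| := by
  have hm : (0 : ℝ) < m := by exact_mod_cast hk1.trans hkm
  have hceil : (k : ℝ) - 1 < (m + 1) * p := by
    have : k - 1 < ⌈((m : ℝ) + 1) * p⌉₊ := hk ▸ Nat.sub_one_lt_of_lt hk1
    simpa [Nat.cast_sub hk1] using Nat.lt_ceil.mp this
  have hemp : empCDF S (qstar + t) < p + 2 / m :=
    calc empCDF S (qstar + t) ≤ ((k : ℝ) - 1) / m := empCDF_le_of_lt_orderStatN S hk1 hkm hq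
      _ < (m + 1) * p / m := by gcongr
      _ = p + p / m := by field_simp
      _ ≤ p + 1 / m := by gcongr; exact hp.2
      _ < p + 2 / m := by gcongr; norm_num
  calc c * t - 2 / m < F (qstar + t) - empCDF S (qstar + t) := by linarith
    _ ≤ |empCDF S (qstar + t) - F (qstar + t)| := by rw [abs_sub_comm]; exact le_abs_self _
    _ ≤ ⨆ q : ℝ, |empCDF S q - F q| := le_ciSup (bddAbove_range_abs_empCDF_sub S hF) _

/-- Right-tail order-statistic deviation inclusion: with `k = ⌈(m+1)p⌉ ≤ m`,
`q̂ = S_{(k)}`, and `F(q* + t) ≥ p + c·t`, if `q̂ > q* + t` then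
`sup_q |F̂_m(q) − F(q)| > c·t − 2/m`. -/
theorem stmt8 {m : ℕ} (S : Fin m → ℝ)
    (F : ℝ → ℝ) (hF : ∀ q, F q ∈ Set.Icc (0 : ℝ) 1)
    (p : ℝ) (hp : p ∈ Set.Icc (0 : ℝ) 1)
    (k : ℕ) (hk : k = ⌈((m : ℝ) + 1) * p⌉₊) (hk1 : 1 ≤ k) (hkm : k ≤ m)
    (qstar t c : ℝ) (ht : 0 < t) (hc : 0 < c)
    (hgrow : p + c * t ≤ F (qstar + t))
    (hq : qstar + t < orderStatN S k) :
    c * t - 2 / m < ⨆ q : ℝ, |empCDF S q - F q| :=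
  stmt8_general S F hF p hp k hk hk1 hkm qstar t c hgrow hq
end

section
/- (Calibration quantile accuracy.) Let S_1, …, S_m be i.i.d. real-valued random variables with common cumulative distribution function F, let α ∈ (0,1), p = 1 − α, and q* = inf{q : F(q) ≥ p}. Let k = ⌈(m+1)p⌉, assume k ≤ m, and set q̂ = S_{(k)}, the k-th order statistic. Fix t > 0 and c > 0 and assume F(q* + t) ≥ p + c·t and F(q* − t) ≤ p − c·t. Then P(|q̂ − q*| > t) ≤ 2·exp(−2m·((c·t − 2/m)₊)²), where (u)₊ = max{u, 0}. -/
/-! The order statistic `S_(k)` exceeds `q* + t` exactly when fewer than `k` samples lie below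
`q* + t`, and it lies below `q* - t` only if at least `k` samples lie below `q* - t`. Each count is
a sum of `m` independent indicators with mean `m F(q* ± t)`, which the growth condition places at
distance at least `m c t` from `m p`. As `k = ⌈(m + 1) p⌉` differs from `m p` by less than `2`,
both events are deviations of at least `m (c t - 2 / m)` from the mean, and Hoeffding's inequality
bounds the probability of each by `exp (-2 m (c t - 2 / m)²)`. -/

open MeasureTheory

open Real ProbabilityTheory Finset

section Hoeffding

variable {Ω ι : Type*} [MeasurableSpace Ω] {μ : Measure Ω} [IsProbabilityMeasure μ]
  {X : ι → Ω → ℝ} {a b : ℝ}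

lemma measureReal_sum_sub_integral_ge_le_of_mem_Icc (hind : iIndepFun X μ)
    (hX : ∀ i, AEMeasurable (X i) μ) (hab : ∀ i, ∀ᵐ ω ∂μ, X i ω ∈ Set.Icc a b)
    (s : Finset ι) {δ : ℝ} (hδ : 0 ≤ δ) :
    μ.real {ω | #s * δ ≤ ∑ i ∈ s, (X i ω - μ[X i])} ≤ exp (-2 * #s * δ ^ 2 / (b - a) ^ 2) := by
  have hcentered : iIndepFun (fun i ω => X i ω - μ[X i]) μ :=
    hind.comp (fun i (x : ℝ) => x - ∫ ω, X i ω ∂μ) fun _ => measurable_id.sub_const _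
  refine (HasSubgaussianMGF.measure_sum_ge_le_of_iIndepFun hcentered
    (fun i _ => hasSubgaussianMGF_of_mem_Icc (hX i) (hab i)) (by positivity)).trans_eq ?_
  simp only [sum_const, nsmul_eq_mul, NNReal.coe_mul, NNReal.coe_natCast, NNReal.coe_pow,
    NNReal.coe_div, coe_nnnorm, Real.norm_eq_abs, NNReal.coe_ofNat, div_pow, sq_abs]
  rcases eq_or_ne (#s : ℝ) 0 with hs | hs
  · simp [hs]
  · field_simp

lemma measureReal_sum_sub_integral_le_le_of_mem_Icc (hind : iIndepFun X μ)
    (hX : ∀ i, AEMeasurable (X i) μ) (hab : ∀ i, ∀ᵐ ω ∂μ, X i ω ∈ Set.Icc a b)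
    (s : Finset ι) {δ : ℝ} (hδ : 0 ≤ δ) :
    μ.real {ω | ∑ i ∈ s, (X i ω - μ[X i]) ≤ -(#s * δ)} ≤
      exp (-2 * #s * δ ^ 2 / (b - a) ^ 2) := by
  have h := measureReal_sum_sub_integral_ge_le_of_mem_Icc (X := fun i ω => -X i ω)
    (a := -b) (b := -a) (hind.comp (fun _ (x : ℝ) => -x) fun _ => measurable_neg)
    (fun i => (hX i).neg) (fun i => (hab i).mono fun ω hω => ⟨neg_le_neg hω.2, neg_le_neg hω.1⟩)
    s hδ
  convert h using 3
  · ext ω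
    simp only [integral_neg, sub_neg_eq_add, neg_add_eq_sub]
    rw [← neg_le_neg_iff, ← sum_neg_distrib]
    simp only [neg_sub, neg_neg]
  · ring

end Hoeffding

section OrderStatistic

noncomputable def empiricalCount {ι : Type*} [Fintype ι] (f : ι → ℝ) (x : ℝ) : ℕ :=
  #{i | f i ≤ x}

lemma Monotone.le_iff_lt_card_filter_le {α : Type*} [LinearOrder α] {m : ℕ} {g : Fin m → α}
    (hg : Monotone g) (j : Fin m) (x : α) :
    g j ≤ x ↔ (j : ℕ) < #{i | g i ≤ x} := by
  constructor
  · intro hj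
    calc (j : ℕ) < #(Iic j) := by simp
      _ ≤ #{i | g i ≤ x} := card_le_card fun i hi =>
          mem_filter.2 ⟨mem_univ i, (hg (mem_Iic.1 hi)).trans hj⟩
  · intro hcard
    by_contra! hj
    have hsub : ({i | g i ≤ x} : Finset (Fin m)) ⊆ Iio j := fun i hi =>
      mem_Iio.2 (lt_of_not_ge fun hji => (hj.trans_le (hg hji)).not_ge (mem_filter.1 hi).2)
    have := card_le_card hsub
    rw [Fin.card_Iio] at this
    omega

variable {m k : ℕ}

lemma orderStatN_le_iff (f : Fin m → ℝ) (hk1 : 1 ≤ k) (hkm : k ≤ m) (x : ℝ) :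
    orderStatN f k ≤ x ↔ k ≤ empiricalCount f x := by
  have hsort : #{i | f (Tuple.sort f i) ≤ x} = empiricalCount f x :=
    card_equiv (Tuple.sort f) fun i => by simp
  rw [orderStatN, dif_pos (by omega), ← Function.comp_apply (f := f),
    Monotone.le_iff_lt_card_filter_le (Tuple.monotone_sort f)]
  simp only [Function.comp_apply, hsort]
  omega

lemma empiricalCount_lt_or_le_of_lt_abs_orderStatN_sub (f : Fin m → ℝ) (hk1 : 1 ≤ k)
    (hkm : k ≤ m) {q t : ℝ} (h : t < |orderStatN f k - q|) :
    empiricalCount f (q + t) < k ∨ k ≤ empiricalCount f (q - t) := by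
  rcases lt_abs.1 h with h | h
  · left
    rw [← not_le, ← orderStatN_le_iff f hk1 hkm]
    linarith
  · right
    rw [← orderStatN_le_iff f hk1 hkm]
    linarith

end OrderStatistic

section EmpiricalCount

variable {Ω ι : Type*} [MeasurableSpace Ω] {μ : Measure Ω} {ν : Measure ℝ} {S : ι → Ω → ℝ}

lemma iIndepFun_indicator_Iic_comp (hind : iIndepFun S μ) (x : ℝ) :
    iIndepFun (fun i ω => (Set.Iic x).indicator (1 : ℝ → ℝ) (S i ω)) μ :=
  hind.comp (fun _ => (Set.Iic x).indicator 1) fun _ => measurable_one.indicator measurableSet_Iic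

lemma indicator_Iic_comp_mem_Icc (x : ℝ) (i : ι) :
    ∀ᵐ ω ∂μ, (Set.Iic x).indicator (1 : ℝ → ℝ) (S i ω) ∈ Set.Icc 0 1 :=
  ae_of_all _ fun ω => by by_cases h : S i ω ≤ x <;> simp [h]

variable [Fintype ι]

lemma empiricalCount_sub_eq_sum_indicator_sub_integral (hS : ∀ i, Measurable (S i))
    (hSL : ∀ i, μ.map (S i) = ν) (x : ℝ) (ω : Ω) :
    (empiricalCount (S · ω) x : ℝ) - Fintype.card ι * ν.real (Set.Iic x) =
      ∑ i, ((Set.Iic x).indicator 1 (S i ω) - ∫ ω', (Set.Iic x).indicator 1 (S i ω') ∂μ) := by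
  have hmean : ∀ i, ∫ ω', (Set.Iic x).indicator 1 (S i ω') ∂μ = ν.real (Set.Iic x) := by
    intro i
    rw [← integral_map (hS i).aemeasurable, hSL i, integral_indicator_one measurableSet_Iic]
    exact (measurable_one.indicator measurableSet_Iic).aestronglyMeasurable
  rw [empiricalCount, natCast_card_filter, sum_sub_distrib]
  simp only [hmean, sum_const, card_univ, nsmul_eq_mul]
  simp only [Set.indicator_apply, Set.mem_Iic, Pi.one_apply]

variable [IsProbabilityMeasure μ]

lemma measureReal_le_empiricalCount_le (hind : iIndepFun S μ) (hS : ∀ i, Measurable (S i))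
    (hSL : ∀ i, μ.map (S i) = ν) {x r a : ℝ} (ha : 0 ≤ a)
    (hr : Fintype.card ι * ν.real (Set.Iic x) + Fintype.card ι * a ≤ r) :
    μ.real {ω | r ≤ empiricalCount (S · ω) x} ≤ exp (-2 * Fintype.card ι * a ^ 2) := by
  calc μ.real {ω | r ≤ empiricalCount (S · ω) x}
      ≤ μ.real {ω | #univ * a ≤ ∑ i, ((Set.Iic x).indicator 1 (S i ω) -
          ∫ ω', (Set.Iic x).indicator 1 (S i ω') ∂μ)} :=
        measureReal_mono fun ω (hω : r ≤ _) => by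
          rw [Set.mem_ofPred_eq, card_univ,
            ← empiricalCount_sub_eq_sum_indicator_sub_integral hS hSL]
          linarith
    _ ≤ exp (-2 * #univ * a ^ 2 / (1 - 0) ^ 2) :=
        measureReal_sum_sub_integral_ge_le_of_mem_Icc (iIndepFun_indicator_Iic_comp hind x)
          (fun i => ((measurable_one.indicator measurableSet_Iic).comp (hS i)).aemeasurable)
          (indicator_Iic_comp_mem_Icc x) univ (by positivity)
    _ = exp (-2 * Fintype.card ι * a ^ 2) := by rw [card_univ, sub_zero, one_pow, div_one]

lemma measureReal_empiricalCount_le_le (hind : iIndepFun S μ) (hS : ∀ i, Measurable (S i))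
    (hSL : ∀ i, μ.map (S i) = ν) {x r a : ℝ} (ha : 0 ≤ a)
    (hr : r + Fintype.card ι * a ≤ Fintype.card ι * ν.real (Set.Iic x)) :
    μ.real {ω | empiricalCount (S · ω) x ≤ r} ≤ exp (-2 * Fintype.card ι * a ^ 2) := by
  calc μ.real {ω | empiricalCount (S · ω) x ≤ r}
      ≤ μ.real {ω | ∑ i, ((Set.Iic x).indicator 1 (S i ω) -
          ∫ ω', (Set.Iic x).indicator 1 (S i ω') ∂μ) ≤ -(#univ * a)} :=
        measureReal_mono fun ω (hω : _ ≤ r) => by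
          rw [Set.mem_ofPred_eq, card_univ,
            ← empiricalCount_sub_eq_sum_indicator_sub_integral hS hSL]
          linarith
    _ ≤ exp (-2 * #univ * a ^ 2 / (1 - 0) ^ 2) :=
        measureReal_sum_sub_integral_le_le_of_mem_Icc (iIndepFun_indicator_Iic_comp hind x)
          (fun i => ((measurable_one.indicator measurableSet_Iic).comp (hS i)).aemeasurable)
          (indicator_Iic_comp_mem_Icc x) univ (by positivity)
    _ = exp (-2 * Fintype.card ι * a ^ 2) := by rw [card_univ, sub_zero, one_pow, div_one]

end EmpiricalCount

lemma natCeil_succ_mul_mem_Ioo (m : ℕ) {p : ℝ} (hp0 : 0 < p) (hp1 : p < 1) :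
    (⌈((m : ℝ) + 1) * p⌉₊ : ℝ) ∈ Set.Ioo (m * p) (m * p + 2) := by
  have hge : ((m : ℝ) + 1) * p ≤ ⌈((m : ℝ) + 1) * p⌉₊ := Nat.le_ceil _
  have hlt : (⌈((m : ℝ) + 1) * p⌉₊ : ℝ) < ((m : ℝ) + 1) * p + 1 :=
    Nat.ceil_lt_add_one (by positivity)
  constructor <;> linarith

theorem stmt10_general {Ω : Type*} [MeasurableSpace Ω] (P : Measure Ω) [IsProbabilityMeasure P]
    (ν : Measure ℝ)
    {m : ℕ}
    (S : Fin m → Ω → ℝ) (hmeas : ∀ i, Measurable (S i))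
    (hindep : ProbabilityTheory.iIndepFun S P)
    (hid : ∀ i, Measure.map (S i) P = ν)
    (F : ℝ → ℝ) (hF : ∀ x, F x = (ν (Set.Iic x)).toReal)
    (α : ℝ) (hα : α ∈ Set.Ioo (0 : ℝ) 1) (p : ℝ) (hp : p = 1 - α)
    (qstar : ℝ)
    (k : ℕ) (hk : k = ⌈((m : ℝ) + 1) * p⌉₊) (hkm : k ≤ m)
    (t c : ℝ)
    (hgrow1 : p + c * t ≤ F (qstar + t)) (hgrow2 : F (qstar - t) ≤ p - c * t) :
    P {ω | t < |orderStatN (fun i => S i ω) k - qstar|} ≤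
      ENNReal.ofReal (2 * Real.exp (-2 * m * (max (c * t - 2 / m) 0) ^ 2)) := by
  obtain ⟨hα0, hα1⟩ := hα
  simp only [← measureReal_def] at hF
  have hp0 : 0 < p := by linarith
  obtain ⟨hk_gt, hk_lt⟩ := hk ▸ natCeil_succ_mul_mem_Ioo m hp0 (by linarith)
  have hk1 : 1 ≤ k := hk ▸ Nat.one_le_iff_ne_zero.2 (Nat.ceil_pos.2 (by positivity)).ne'
  have hm0 : (0 : ℝ) < m := by exact_mod_cast hk1.trans hkm
  rcases le_or_gt (c * t - 2 / m) 0 with ha | ha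
  · rw [max_eq_right ha]
    exact prob_le_one.trans (by norm_num)
  rw [max_eq_left ha.le, ENNReal.le_ofReal_iff_toReal_le (measure_ne_top _ _) (by positivity)]
  have hma : (m : ℝ) * (c * t - 2 / m) = m * c * t - 2 := by field_simp
  have hgrow1' := mul_le_mul_of_nonneg_left hgrow1 hm0.le
  have hgrow2' := mul_le_mul_of_nonneg_left hgrow2 hm0.le
  have hlow := measureReal_empiricalCount_le_le hindep hmeas hid ha.le
    (x := qstar + t) (r := k - 1) (by rw [Fintype.card_fin, ← hF]; linarith)
  have hup := measureReal_le_empiricalCount_le hindep hmeas hid ha.le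
    (x := qstar - t) (r := k) (by rw [Fintype.card_fin, ← hF]; linarith)
  rw [Fintype.card_fin] at hlow hup
  calc P.real {ω | t < |orderStatN (fun i => S i ω) k - qstar|}
      ≤ P.real ({ω | empiricalCount (S · ω) (qstar + t) ≤ (k : ℝ) - 1} ∪
          {ω | (k : ℝ) ≤ empiricalCount (S · ω) (qstar - t)}) :=
        measureReal_mono fun ω hω =>
          (empiricalCount_lt_or_le_of_lt_abs_orderStatN_sub _ hk1 hkm hω).imp
            (fun h => by
              rw [Set.mem_ofPred_eq, le_sub_iff_add_le]
              exact_mod_cast h)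
            (fun h => by exact_mod_cast h)
    _ ≤ _ := (measureReal_union_le _ _).trans (by linarith)

/-- Calibration quantile accuracy: for `S 1, …, S m` i.i.d. with CDF `F`,
`p = 1 − α`, `q* = inf{q : F(q) ≥ p}`, `k = ⌈(m+1)p⌉ ≤ m`, `q̂ = S_{(k)}`, and the
two-sided growth condition `F(q* + t) ≥ p + c·t`, `F(q* − t) ≤ p − c·t`, we have
`P(|q̂ − q*| > t) ≤ 2·exp(−2m·((c·t − 2/m)₊)²)`. -/
theorem stmt10 {Ω : Type*} [MeasurableSpace Ω] (P : Measure Ω) [IsProbabilityMeasure P]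
    (ν : Measure ℝ) [IsProbabilityMeasure ν]
    {m : ℕ}
    (S : Fin m → Ω → ℝ) (hmeas : ∀ i, Measurable (S i))
    (hindep : ProbabilityTheory.iIndepFun S P)
    (hid : ∀ i, Measure.map (S i) P = ν)
    (F : ℝ → ℝ) (hF : ∀ x, F x = (ν (Set.Iic x)).toReal)
    (α : ℝ) (hα : α ∈ Set.Ioo (0 : ℝ) 1) (p : ℝ) (hp : p = 1 - α)
    (qstar : ℝ) (hqstar : qstar = sInf {q : ℝ | p ≤ F q})
    (k : ℕ) (hk : k = ⌈((m : ℝ) + 1) * p⌉₊) (hkm : k ≤ m)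
    (t c : ℝ) (ht : 0 < t) (hc : 0 < c)
    (hgrow1 : p + c * t ≤ F (qstar + t)) (hgrow2 : F (qstar - t) ≤ p - c * t) :
    P {ω | t < |orderStatN (fun i => S i ω) k - qstar|} ≤
      ENNReal.ofReal (2 * Real.exp (-2 * m * (max (c * t - 2 / m) 0) ^ 2)) :=
  stmt10_general P ν S hmeas hindep hid F hF α hα p hp qstar k hk hkm t c hgrow1 hgrow2
end

section
/- (Consistency of the coupled CRC/BQ threshold.) Let Λ ⊆ ℝ be an interval, α ∈ (0,1), and R : Λ → ℝ a nonincreasing function, continuous and strictly decreasing on a neighbourhood of λ* = inf{λ ∈ Λ : R(λ) ≤ α}, with λ* interior to Λ. For each m, let R̂_m : Λ → ℝ and b_m : Λ → [0, ∞) be random functions with sup_{λ ∈ Λ} |R̂_m(λ) − R(λ)| → 0 in probability and sup_{λ ∈ Λ} b_m(λ) → 0 in probability, and define λ̂_m = inf{λ ∈ Λ : R̂_m(λ) + b_m(λ) ≤ α}. Then λ̂_m → λ* in probability. -/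
/-!
Pick `lo < λ* < hi` within `ε` of `λ*` with `R hi < α < R lo`; the strict decrease of `R`
near `λ*` provides `hi`, the definition of `λ*` as an infimum provides `lo`. On the event
that `R̂_m` is uniformly `η`-close to `R` and `b_m ≤ η`, with `η` a fixed fraction of the
gaps `α - R hi` and `R lo - α`, the criterion `R̂_m + b_m` is still `≤ α` at `hi` and
`> α` left of `lo`, so `λ̂_m ∈ [lo, hi]`. The complementary event has vanishing probability.
-/

open MeasureTheory Filter

section Sublevel

variable {Λ : Set ℝ} {F : ℝ → ℝ} {α : ℝ}

theorem csInf_sublevel_mem_Icc {lo hi : ℝ} (hhi : hi ∈ Λ) (hFhi : F hi ≤ α)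
    (hlo : ∀ l ∈ Λ, l < lo → α < F l) :
    sInf {l | l ∈ Λ ∧ F l ≤ α} ∈ Set.Icc lo hi := by
  have hlower : ∀ l ∈ {l | l ∈ Λ ∧ F l ≤ α}, lo ≤ l := fun l hl =>
    le_of_not_gt fun hlt => (hlo l hl.1 hlt).not_ge hl.2
  exact ⟨le_csInf ⟨hi, hhi, hFhi⟩ hlower, csInf_le ⟨lo, hlower⟩ ⟨hhi, hFhi⟩⟩

theorem lt_of_lt_csInf_sublevel (hbdd : BddBelow {l | l ∈ Λ ∧ F l ≤ α}) {l : ℝ} (hl : l ∈ Λ)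
    (hlt : l < sInf {l | l ∈ Λ ∧ F l ≤ α}) : α < F l :=
  lt_of_not_ge fun hle => notMem_of_lt_csInf hlt hbdd ⟨hl, hle⟩

theorem le_of_csInf_sublevel_lt (hF : AntitoneOn F Λ) (hne : {l | l ∈ Λ ∧ F l ≤ α}.Nonempty)
    {l : ℝ} (hl : l ∈ Λ) (hlt : sInf {l | l ∈ Λ ∧ F l ≤ α} < l) : F l ≤ α := by
  obtain ⟨s, ⟨hsΛ, hs⟩, hsl⟩ := exists_lt_of_csInf_lt hne hlt
  exact (hF hsΛ hl hsl.le).trans hs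

theorem exists_bracket_csInf_sublevel (hF : AntitoneOn F Λ)
    (hne : {l | l ∈ Λ ∧ F l ≤ α}.Nonempty) (hbdd : BddBelow {l | l ∈ Λ ∧ F l ≤ α})
    (hint : sInf {l | l ∈ Λ ∧ F l ≤ α} ∈ interior Λ) {U : Set ℝ}
    (hU : U ∈ nhds (sInf {l | l ∈ Λ ∧ F l ≤ α})) (hstrict : StrictAntiOn F U)
    {ε : ℝ} (hε : 0 < ε) :
    ∃ lo hi, lo ∈ Λ ∧ hi ∈ Λ ∧ sInf {l | l ∈ Λ ∧ F l ≤ α} - ε ≤ lo ∧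
      hi ≤ sInf {l | l ∈ Λ ∧ F l ≤ α} + ε ∧ F hi < α ∧ α < F lo := by
  set c := sInf {l | l ∈ Λ ∧ F l ≤ α}
  obtain ⟨r, hr, hball⟩ :=
    Metric.mem_nhds_iff.mp (inter_mem hU (isOpen_interior.mem_nhds hint))
  set δ := min (r / 2) ε
  have hδ : 0 < δ := lt_min (half_pos hr) hε
  have hmem : ∀ t, |t| ≤ δ → c + t ∈ U ∧ c + t ∈ Λ := fun t ht => by
    have hin := hball (show c + t ∈ Metric.ball c r by
      rw [Metric.mem_ball, Real.dist_eq, add_sub_cancel_left]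
      linarith [min_le_left (r / 2) ε])
    exact ⟨hin.1, interior_subset hin.2⟩
  have hhi := hmem δ (abs_of_pos hδ).le
  have hmid := hmem (δ / 2) (by rw [abs_of_pos (half_pos hδ)]; linarith)
  have hlo := hmem (-δ) (abs_neg δ ▸ (abs_of_pos hδ).le)
  refine ⟨c + -δ, c + δ, hlo.2, hhi.2, by linarith [min_le_right (r / 2) ε],
    by linarith [min_le_right (r / 2) ε], ?_, ?_⟩
  · calc F (c + δ) < F (c + δ / 2) := hstrict hmid.1 hhi.1 (by linarith)
      _ ≤ α := le_of_csInf_sublevel_lt hF hne hmid.2 (by linarith)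
  · exact lt_of_lt_csInf_sublevel hbdd hlo.2 (by linarith)

theorem csInf_perturbed_sublevel_mem_Icc (hF : AntitoneOn F Λ) {Fhat b : ℝ → ℝ}
    {η lo hi : ℝ} (hlo : lo ∈ Λ) (hhi : hi ∈ Λ) (hFhi : F hi + 2 * η ≤ α)
    (hFlo : α < F lo - η) (hFhat : ∀ l ∈ Λ, |Fhat l - F l| ≤ η)
    (hb_nonneg : ∀ l ∈ Λ, 0 ≤ b l) (hb_le : ∀ l ∈ Λ, b l ≤ η) :
    sInf {l | l ∈ Λ ∧ Fhat l + b l ≤ α} ∈ Set.Icc lo hi := by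
  refine csInf_sublevel_mem_Icc hhi ?_ fun l hl hlt => ?_
  · linarith [(abs_le.mp (hFhat hi hhi)).2, hb_le hi hhi]
  · linarith [(abs_le.mp (hFhat l hl)).1, hb_nonneg l hl, hF hl hlo hlt.le]

end Sublevel

theorem tendsto_measure_of_subset_union {Ω ι : Type*} [MeasurableSpace Ω] {μ : Measure Ω}
    {f : Filter ι} {s t u : ι → Set Ω} (hsub : ∀ m, s m ⊆ t m ∪ u m)
    (ht : Tendsto (fun m => μ (t m)) f (nhds 0))
    (hu : Tendsto (fun m => μ (u m)) f (nhds 0)) :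
    Tendsto (fun m => μ (s m)) f (nhds 0) := by
  refine tendsto_of_tendsto_of_tendsto_of_le_of_le tendsto_const_nhds
    (by simpa using ht.add hu) (fun _ => zero_le) fun m => ?_
  exact (measure_mono (hsub m)).trans (measure_union_le _ _)

theorem stmt14_general {Ω : Type*} [MeasurableSpace Ω] (P : Measure Ω)
    (Λ : Set ℝ) (α : ℝ)
    (R : ℝ → ℝ) (hR : AntitoneOn R Λ)
    (lamstar : ℝ) (hdef : lamstar = sInf {l | l ∈ Λ ∧ R l ≤ α})
    (hne : {l | l ∈ Λ ∧ R l ≤ α}.Nonempty)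
    (hbdd : BddBelow {l | l ∈ Λ ∧ R l ≤ α})
    (hint : lamstar ∈ interior Λ)
    (hreg : ∃ U ∈ nhds lamstar, ContinuousOn R U ∧ StrictAntiOn R U)
    (Rhat : ℕ → Ω → ℝ → ℝ) (b : ℕ → Ω → ℝ → ℝ)
    (hbpos : ∀ m ω, ∀ l ∈ Λ, 0 ≤ b m ω l)
    (hRconv : ∀ ε > 0,
      Tendsto (fun m => P {ω | ∃ l ∈ Λ, ε < |Rhat m ω l - R l|}) atTop (nhds 0))
    (hbconv : ∀ ε > 0,
      Tendsto (fun m => P {ω | ∃ l ∈ Λ, ε < b m ω l}) atTop (nhds 0))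
    (lamhat : ℕ → Ω → ℝ)
    (hlamhat : ∀ m ω, lamhat m ω = sInf {l | l ∈ Λ ∧ Rhat m ω l + b m ω l ≤ α}) :
    ∀ ε > 0,
      Tendsto (fun m => P {ω | ε < |lamhat m ω - lamstar|}) atTop (nhds 0) := by
  intro ε hε
  obtain ⟨U, hU, -, hstrict⟩ := hreg
  subst hdef
  obtain ⟨lo, hi, hlo, hhi, hlo_ge, hhi_le, hRhi, hRlo⟩ :=
    exists_bracket_csInf_sublevel hR hne hbdd hint hU hstrict hε
  obtain ⟨η, hη, hηhi, hηlo⟩ : ∃ η, 0 < η ∧ R hi + 2 * η ≤ α ∧ α < R lo - η :=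
    ⟨min (α - R hi) (R lo - α) / 2, half_pos (lt_min (by linarith) (by linarith)),
      by linarith [min_le_left (α - R hi) (R lo - α)],
      by linarith [min_le_right (α - R hi) (R lo - α)]⟩
  refine tendsto_measure_of_subset_union (fun m ω hω => ?_) (hRconv η hη) (hbconv η hη)
  by_contra hgood
  simp only [Set.mem_union, Set.mem_ofPred_eq, not_or, not_exists, not_and, not_lt] at hgood
  have hIcc := csInf_perturbed_sublevel_mem_Icc hR hlo hhi hηhi hηlo hgood.1 (hbpos m ω) hgood.2
  rw [← hlamhat] at hIcc
  have hclose : |lamhat m ω - sInf {l | l ∈ Λ ∧ R l ≤ α}| ≤ ε :=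
    abs_sub_le_iff.mpr ⟨by linarith [hIcc.2], by linarith [hIcc.1]⟩
  exact hclose.not_gt hω

/-- Consistency of the coupled CRC/BQ threshold: let `Λ` be an interval, `R` nonincreasing
on `Λ`, continuous and strictly decreasing near `λ* = inf{λ ∈ Λ : R(λ) ≤ α}`, which is
interior to `Λ`.  If `sup_{λ ∈ Λ} |R̂_m(λ) − R(λ)| → 0` and `sup_{λ ∈ Λ} b_m(λ) → 0` in
probability (with `b_m ≥ 0` on `Λ`), then `λ̂_m = inf{λ ∈ Λ : R̂_m(λ) + b_m(λ) ≤ α}`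
converges to `λ*` in probability. -/
theorem stmt14 {Ω : Type*} [MeasurableSpace Ω] (P : Measure Ω) [IsProbabilityMeasure P]
    (Λ : Set ℝ) (hΛ : Λ.OrdConnected) (α : ℝ) (hα : α ∈ Set.Ioo (0 : ℝ) 1)
    (R : ℝ → ℝ) (hR : AntitoneOn R Λ)
    (lamstar : ℝ) (hdef : lamstar = sInf {l | l ∈ Λ ∧ R l ≤ α})
    (hne : {l | l ∈ Λ ∧ R l ≤ α}.Nonempty)
    (hbdd : BddBelow {l | l ∈ Λ ∧ R l ≤ α})
    (hint : lamstar ∈ interior Λ)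
    (hreg : ∃ U ∈ nhds lamstar, ContinuousOn R U ∧ StrictAntiOn R U)
    (Rhat : ℕ → Ω → ℝ → ℝ) (b : ℕ → Ω → ℝ → ℝ)
    (hbpos : ∀ m ω, ∀ l ∈ Λ, 0 ≤ b m ω l)
    (hRconv : ∀ ε > 0,
      Tendsto (fun m => P {ω | ∃ l ∈ Λ, ε < |Rhat m ω l - R l|}) atTop (nhds 0))
    (hbconv : ∀ ε > 0,
      Tendsto (fun m => P {ω | ∃ l ∈ Λ, ε < b m ω l}) atTop (nhds 0))
    (lamhat : ℕ → Ω → ℝ)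
    (hlamhat : ∀ m ω, lamhat m ω = sInf {l | l ∈ Λ ∧ Rhat m ω l + b m ω l ≤ α}) :
    ∀ ε > 0,
      Tendsto (fun m => P {ω | ε < |lamhat m ω - lamstar|}) atTop (nhds 0) :=
  stmt14_general P Λ α R hR lamstar hdef hne hbdd hint hreg Rhat b hbpos hRconv hbconv lamhat
    hlamhat
end

section
/- (Asymptotic agreement of DCO and CRC/BQ thresholds.) Let Λ ⊆ ℝ be an interval, α ∈ (0,1), and R : Λ → ℝ a nonincreasing function, continuous and strictly decreasing on a neighbourhood of λ* = inf{λ ∈ Λ : R(λ) ≤ α}, with λ* interior to Λ. For each m, let λ̂_DCO,m be random variables with λ̂_DCO,m → λ* in probability, and let R̂_m : Λ → ℝ and b_m : Λ → [0, ∞) be random functions with sup_{λ ∈ Λ} |R̂_m(λ) − R(λ)| → 0 in probability and sup_{λ ∈ Λ} b_m(λ) → 0 in probability; define λ̂_CRC,m = inf{λ ∈ Λ : R̂_m(λ) + b_m(λ) ≤ α}. Then λ̂_CRC,m − λ̂_DCO,m → 0 in probability. -/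
open MeasureTheory Filter Set Topology

/-!
Uniform consistency of `R̂_m + b_m` pins the CRC threshold between two fixed points
`a < λ* < c` as close to `λ*` as desired: `α < R a` because `a < λ*`, and strict monotonicity
of `R` near `λ*` gives `R c < α`. Once the perturbation is below the gap
`min (α - R c) (R a - α)`, the point `c` belongs to the perturbed sublevel set and no point left
of `a` does. Hence
`λ̂_CRC,m → λ*` in probability, and the triangle inequality through `λ*` finishes the proof.
-/

lemma tendsto_measure_of_subset_union_s15 {Ω ι : Type*} [MeasurableSpace Ω] (P : Measure Ω)
    {l : Filter ι} {A B C : ι → Set Ω} (hsub : ∀ i, A i ⊆ B i ∪ C i)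
    (hB : Tendsto (fun i => P (B i)) l (𝓝 0)) (hC : Tendsto (fun i => P (C i)) l (𝓝 0)) :
    Tendsto (fun i => P (A i)) l (𝓝 0) := by
  have hBC := hB.add hC
  rw [add_zero] at hBC
  exact tendsto_of_tendsto_of_tendsto_of_le_of_le tendsto_const_nhds hBC (fun _ => zero_le)
    fun i => (measure_mono (hsub i)).trans (measure_union_le _ _)

section Sublevel

variable {Λ : Set ℝ} {R : ℝ → ℝ} {α : ℝ}

lemma AntitoneOn.le_of_sInf_sublevel_lt (hR : AntitoneOn R Λ)
    (hbdd : BddBelow {l | l ∈ Λ ∧ R l ≤ α}) (hne : {l | l ∈ Λ ∧ R l ≤ α}.Nonempty)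
    {l : ℝ} (hl : l ∈ Λ) (hlt : sInf {l | l ∈ Λ ∧ R l ≤ α} < l) : R l ≤ α := by
  obtain ⟨s, ⟨hsΛ, hRs⟩, hsl⟩ := (csInf_lt_iff hbdd hne).mp hlt
  exact (hR hsΛ hl hsl.le).trans hRs

lemma lt_of_lt_sInf_sublevel (hbdd : BddBelow {l | l ∈ Λ ∧ R l ≤ α})
    {l : ℝ} (hl : l ∈ Λ) (hlt : l < sInf {l | l ∈ Λ ∧ R l ≤ α}) : α < R l := by
  by_contra! hRl
  exact hlt.not_ge (csInf_le hbdd ⟨hl, hRl⟩)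

lemma exists_bracket_sInf_sublevel (hR : AntitoneOn R Λ)
    (hbdd : BddBelow {l | l ∈ Λ ∧ R l ≤ α}) (hne : {l | l ∈ Λ ∧ R l ≤ α}.Nonempty)
    (hint : sInf {l | l ∈ Λ ∧ R l ≤ α} ∈ interior Λ)
    (hstrict : ∃ U ∈ 𝓝 (sInf {l | l ∈ Λ ∧ R l ≤ α}), StrictAntiOn R U)
    {ε : ℝ} (hε : 0 < ε) :
    ∃ a ∈ Λ, ∃ c ∈ Λ, sInf {l | l ∈ Λ ∧ R l ≤ α} - ε ≤ a ∧
      c ≤ sInf {l | l ∈ Λ ∧ R l ≤ α} + ε ∧ R c < α ∧ α < R a := by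
  set s := sInf {l | l ∈ Λ ∧ R l ≤ α}
  obtain ⟨U, hU, hanti⟩ := hstrict
  obtain ⟨r, hr, hball⟩ := Metric.mem_nhds_iff.mp (inter_mem hU (isOpen_interior.mem_nhds hint))
  have hnear : ∀ t, |t| < r → s + t ∈ U ∧ s + t ∈ Λ := fun t ht => by
    have hmem := hball (show s + t ∈ Metric.ball s r by simpa [Real.dist_eq] using ht)
    exact ⟨hmem.1, interior_subset hmem.2⟩
  obtain ⟨e, he, heε, her⟩ : ∃ e, 0 < e ∧ e ≤ ε ∧ e < r :=
    ⟨min ε r / 2, by positivity, by linarith [min_le_left ε r], by linarith [min_le_right ε r]⟩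
  have hc := hnear e (by rwa [abs_of_pos he])
  have hmid := hnear (e / 2) (by rw [abs_of_pos (half_pos he)]; linarith)
  have ha := hnear (-e) (by rwa [abs_neg, abs_of_pos he])
  rw [← sub_eq_add_neg] at ha
  refine ⟨s - e, ha.2, s + e, hc.2, ?_, ?_, ?_, ?_⟩
  · linarith
  · linarith
  · exact (hanti hmid.1 hc.1 (by linarith)).trans_le
      (hR.le_of_sInf_sublevel_lt hbdd hne hmid.2 (by linarith))
  · exact lt_of_lt_sInf_sublevel hbdd ha.2 (by linarith)

lemma sInf_perturbed_sublevel_mem_Icc (hR : AntitoneOn R Λ) {Rhat b : ℝ → ℝ} {a c δ : ℝ}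
    (ha : a ∈ Λ) (hc : c ∈ Λ) (hRc : R c + 2 * δ ≤ α) (hRa : α + δ < R a)
    (hRhat : ∀ l ∈ Λ, |Rhat l - R l| ≤ δ) (hb0 : ∀ l ∈ Λ, 0 ≤ b l) (hb : ∀ l ∈ Λ, b l ≤ δ) :
    sInf {l | l ∈ Λ ∧ Rhat l + b l ≤ α} ∈ Icc a c := by
  have hcS : c ∈ {l | l ∈ Λ ∧ Rhat l + b l ≤ α} :=
    ⟨hc, by linarith [(abs_le.mp (hRhat c hc)).2, hb c hc]⟩
  have hlow : a ∈ lowerBounds {l | l ∈ Λ ∧ Rhat l + b l ≤ α} := by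
    rintro l ⟨hl, hle⟩
    by_contra! hla
    linarith [hR hl ha hla.le, (abs_le.mp (hRhat l hl)).1, hb0 l hl]
  exact ⟨le_csInf ⟨c, hcS⟩ hlow, csInf_le ⟨a, hlow⟩ hcS⟩

end Sublevel

lemma tendsto_measure_abs_sInf_perturbed_sublevel_sub_gt {Ω : Type*} [MeasurableSpace Ω]
    (P : Measure Ω) {Λ : Set ℝ} {R : ℝ → ℝ} {α : ℝ} (hR : AntitoneOn R Λ)
    (hbdd : BddBelow {l | l ∈ Λ ∧ R l ≤ α}) (hne : {l | l ∈ Λ ∧ R l ≤ α}.Nonempty)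
    (hint : sInf {l | l ∈ Λ ∧ R l ≤ α} ∈ interior Λ)
    (hstrict : ∃ U ∈ 𝓝 (sInf {l | l ∈ Λ ∧ R l ≤ α}), StrictAntiOn R U)
    {Rhat b : ℕ → Ω → ℝ → ℝ} (hbpos : ∀ m ω, ∀ l ∈ Λ, 0 ≤ b m ω l)
    (hRconv : ∀ ε > 0,
      Tendsto (fun m => P {ω | ∃ l ∈ Λ, ε < |Rhat m ω l - R l|}) atTop (𝓝 0))
    (hbconv : ∀ ε > 0, Tendsto (fun m => P {ω | ∃ l ∈ Λ, ε < b m ω l}) atTop (𝓝 0))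
    {ε : ℝ} (hε : 0 < ε) :
    Tendsto (fun m => P {ω | ε < |sInf {l | l ∈ Λ ∧ Rhat m ω l + b m ω l ≤ α} -
      sInf {l | l ∈ Λ ∧ R l ≤ α}|}) atTop (𝓝 0) := by
  obtain ⟨a, ha, c, hc, hsa, hcs, hRc, hRa⟩ :=
    exists_bracket_sInf_sublevel hR hbdd hne hint hstrict hε
  obtain ⟨δ, hδ, hδc, hδa⟩ : ∃ δ > 0, R c + 2 * δ ≤ α ∧ α + δ < R a :=
    ⟨min (α - R c) (R a - α) / 3,
      by have := lt_min (sub_pos.mpr hRc) (sub_pos.mpr hRa); positivity,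
      by linarith [min_le_left (α - R c) (R a - α)], by linarith [min_le_right (α - R c) (R a - α)]⟩
  refine tendsto_measure_of_subset_union_s15 P (fun m ω hω => ?_) (hRconv δ hδ) (hbconv δ hδ)
  by_contra! hgood
  simp only [mem_union, mem_ofPred_eq, not_or, not_exists, not_and, not_lt] at hgood
  have hIcc := sInf_perturbed_sublevel_mem_Icc hR ha hc hδc hδa hgood.1 (hbpos m ω) hgood.2
  obtain ⟨haS, hSc⟩ := hIcc
  rw [mem_ofPred_eq, lt_abs] at hω
  rcases hω with hω | hω <;> linarith

theorem stmt15_general {Ω : Type*} [MeasurableSpace Ω] (P : Measure Ω)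
    (Λ : Set ℝ) (α : ℝ)
    (R : ℝ → ℝ) (hR : AntitoneOn R Λ)
    (lamstar : ℝ) (hdef : lamstar = sInf {l | l ∈ Λ ∧ R l ≤ α})
    (hne : {l | l ∈ Λ ∧ R l ≤ α}.Nonempty)
    (hbdd : BddBelow {l | l ∈ Λ ∧ R l ≤ α})
    (hint : lamstar ∈ interior Λ)
    (hreg : ∃ U ∈ nhds lamstar, ContinuousOn R U ∧ StrictAntiOn R U)
    (lamDCO : ℕ → Ω → ℝ)
    (hDCO : ∀ ε > 0,
      Tendsto (fun m => P {ω | ε < |lamDCO m ω - lamstar|}) atTop (nhds 0))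
    (Rhat : ℕ → Ω → ℝ → ℝ) (b : ℕ → Ω → ℝ → ℝ)
    (hbpos : ∀ m ω, ∀ l ∈ Λ, 0 ≤ b m ω l)
    (hRconv : ∀ ε > 0,
      Tendsto (fun m => P {ω | ∃ l ∈ Λ, ε < |Rhat m ω l - R l|}) atTop (nhds 0))
    (hbconv : ∀ ε > 0,
      Tendsto (fun m => P {ω | ∃ l ∈ Λ, ε < b m ω l}) atTop (nhds 0))
    (lamCRC : ℕ → Ω → ℝ)
    (hlamCRC : ∀ m ω, lamCRC m ω = sInf {l | l ∈ Λ ∧ Rhat m ω l + b m ω l ≤ α}) :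
    ∀ ε > 0,
      Tendsto (fun m => P {ω | ε < |lamCRC m ω - lamDCO m ω|}) atTop (nhds 0) := by
  subst hdef
  intro ε hε
  obtain ⟨U, hU, -, hanti⟩ := hreg
  have hCRC := tendsto_measure_abs_sInf_perturbed_sublevel_sub_gt P hR hbdd hne hint
    ⟨U, hU, hanti⟩ hbpos hRconv hbconv (half_pos hε)
  simp only [← hlamCRC] at hCRC
  refine tendsto_measure_of_subset_union_s15 P (fun m ω hω => ?_) hCRC (hDCO _ (half_pos hε))
  by_contra! hclose
  simp only [mem_union, mem_ofPred_eq, not_or, not_lt] at hclose hω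
  linarith [abs_sub_le (lamCRC m ω) (sInf {l | l ∈ Λ ∧ R l ≤ α}) (lamDCO m ω),
    abs_sub_comm (lamDCO m ω) (sInf {l | l ∈ Λ ∧ R l ≤ α})]

/-- Asymptotic agreement of DCO and CRC/BQ thresholds: under the regularity conditions on
the population risk `R` near `λ* = inf{λ ∈ Λ : R(λ) ≤ α}`, if the DCO thresholds satisfy
`λ̂_DCO,m → λ*` in probability, and the coupled thresholds
`λ̂_CRC,m = inf{λ ∈ Λ : R̂_m(λ) + b_m(λ) ≤ α}` are built from uniformly consistent risk
estimates `R̂_m` and uniformly vanishing nonnegative margins `b_m`, then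
`λ̂_CRC,m − λ̂_DCO,m → 0` in probability. -/
theorem stmt15 {Ω : Type*} [MeasurableSpace Ω] (P : Measure Ω) [IsProbabilityMeasure P]
    (Λ : Set ℝ) (hΛ : Λ.OrdConnected) (α : ℝ) (hα : α ∈ Set.Ioo (0 : ℝ) 1)
    (R : ℝ → ℝ) (hR : AntitoneOn R Λ)
    (lamstar : ℝ) (hdef : lamstar = sInf {l | l ∈ Λ ∧ R l ≤ α})
    (hne : {l | l ∈ Λ ∧ R l ≤ α}.Nonempty)
    (hbdd : BddBelow {l | l ∈ Λ ∧ R l ≤ α})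
    (hint : lamstar ∈ interior Λ)
    (hreg : ∃ U ∈ nhds lamstar, ContinuousOn R U ∧ StrictAntiOn R U)
    (lamDCO : ℕ → Ω → ℝ)
    (hDCO : ∀ ε > 0,
      Tendsto (fun m => P {ω | ε < |lamDCO m ω - lamstar|}) atTop (nhds 0))
    (Rhat : ℕ → Ω → ℝ → ℝ) (b : ℕ → Ω → ℝ → ℝ)
    (hbpos : ∀ m ω, ∀ l ∈ Λ, 0 ≤ b m ω l)
    (hRconv : ∀ ε > 0,
      Tendsto (fun m => P {ω | ∃ l ∈ Λ, ε < |Rhat m ω l - R l|}) atTop (nhds 0))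
    (hbconv : ∀ ε > 0,
      Tendsto (fun m => P {ω | ∃ l ∈ Λ, ε < b m ω l}) atTop (nhds 0))
    (lamCRC : ℕ → Ω → ℝ)
    (hlamCRC : ∀ m ω, lamCRC m ω = sInf {l | l ∈ Λ ∧ Rhat m ω l + b m ω l ≤ α}) :
    ∀ ε > 0,
      Tendsto (fun m => P {ω | ε < |lamCRC m ω - lamDCO m ω|}) atTop (nhds 0) :=
  stmt15_general P Λ α R hR lamstar hdef hne hbdd hint hreg lamDCO hDCO Rhat b hbpos hRconv hbconv
    lamCRC hlamCRC
end
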